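/- arXiv:2404.12137 — 2 statements merged into one kernel-verified Lean document; each statement's English description precedes it below -/
import Mathlib

section
/- Let $0<\lambda_0<1$ and suppose $\chi_k = 0$ for all $k \ge k_0 - 1$ (for some integer $k_0 \ge 1$), and suppose $\sum_{j=0}^{k_0-1}\lambda_0^{-j}\chi_j + \lambda_0(C_1^2 - C_2) \neq 0$. Then, with $C_1^2 - u_k = \lambda_0^k(\sum_{j=0}^k \lambda_0^{-j}\chi_j + \lambda_0(C_1^2-C_2))$, one has $C_1^2 - u_{k_0-2} \neq 0$ and $\lambda_0 = \frac{C_1^2 - u_{k_0-1}}{C_1^2 - u_{k_0-2}}$. -/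
open Finset in
/-- If the `χ_k` vanish from index `k₀ - 1` on and the limiting constant
is nonzero, then `λ₀ = (C₁² - u_{k₀-1}) / (C₁² - u_{k₀-2})`.  The sequence `u` is
indexed by `ℤ` (with `u (-1) = C₂`) so that the case `k₀ = 1` makes sense. -/
theorem stmt5 (lam₀ C₁ C₂ : ℝ) (hlam0 : 0 < lam₀) (hlam1 : lam₀ < 1)
    (k₀ : ℕ) (hk₀ : 1 ≤ k₀)
    (u : ℤ → ℝ) (χ : ℕ → ℝ)
    (hinit : u (-1) = C₂)
    (hχ : ∀ k : ℕ, k₀ - 1 ≤ k → χ k = 0)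
    (hnonzero : (∑ j ∈ range k₀, (lam₀⁻¹) ^ j * χ j) + lam₀ * (C₁ ^ 2 - C₂) ≠ 0)
    (hform : ∀ k : ℕ, C₁ ^ 2 - u (k : ℤ)
      = lam₀ ^ k * ((∑ j ∈ range (k + 1), (lam₀⁻¹) ^ j * χ j) + lam₀ * (C₁ ^ 2 - C₂))) :
    C₁ ^ 2 - u ((k₀ : ℤ) - 2) ≠ 0 ∧
      lam₀ = (C₁ ^ 2 - u ((k₀ : ℤ) - 1)) / (C₁ ^ 2 - u ((k₀ : ℤ) - 2)) := by
  have hlamne : lam₀ ≠ 0 := ne_of_gt hlam0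
  rcases Nat.lt_or_ge k₀ 2 with h2 | h2
  · -- k₀ = 1
    have hk1 : k₀ = 1 := le_antisymm (Nat.lt_succ_iff.mp h2) hk₀
    subst hk1
    have hχ0 : χ 0 = 0 := hχ 0 (by norm_num)
    have hnz : C₁ ^ 2 - C₂ ≠ 0 := by
      intro h
      apply hnonzero
      simp [hχ0, h]
    have h0 : C₁ ^ 2 - u (0 : ℤ) = lam₀ * (C₁ ^ 2 - C₂) := by
      have := hform 0
      simpa [hχ0] using this
    have hm1 : C₁ ^ 2 - u (-1 : ℤ) = C₁ ^ 2 - C₂ := by rw [hinit]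
    have e1 : ((1:ℕ):ℤ) - 2 = -1 := by norm_num
    have e2 : ((1:ℕ):ℤ) - 1 = 0 := by norm_num
    rw [e1, e2, hm1, h0]
    exact ⟨hnz, by rw [mul_div_assoc, div_self hnz, mul_one]⟩
  · -- k₀ ≥ 2
    obtain ⟨m, rfl⟩ : ∃ m, k₀ = m + 2 := ⟨k₀ - 2, by omega⟩
    have hχtop : χ (m + 1) = 0 := hχ (m + 1) (by omega)
    set S := (∑ j ∈ range (m + 1), (lam₀⁻¹) ^ j * χ j) with hS
    have hsum : (∑ j ∈ range (m + 2), (lam₀⁻¹) ^ j * χ j) = S := by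
      rw [Finset.sum_range_succ, hχtop, mul_zero, add_zero]
    have hD : S + lam₀ * (C₁ ^ 2 - C₂) ≠ 0 := by rwa [hsum] at hnonzero
    have ha : C₁ ^ 2 - u ((m : ℤ)) = lam₀ ^ m * (S + lam₀ * (C₁ ^ 2 - C₂)) := hform m
    have hb : C₁ ^ 2 - u ((m : ℤ) + 1) =
        lam₀ ^ (m + 1) * (S + lam₀ * (C₁ ^ 2 - C₂)) := by
      have := hform (m + 1)
      rw [hsum] at this
      simpa using this
    have hcast1 : ((m + 2 : ℕ) : ℤ) - 2 = (m : ℤ) := by push_cast; ring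
    have hcast2 : ((m + 2 : ℕ) : ℤ) - 1 = (m : ℤ) + 1 := by push_cast; ring
    rw [hcast1, hcast2]
    have hane : C₁ ^ 2 - u ((m : ℤ)) ≠ 0 := by
      rw [ha]; exact mul_ne_zero (pow_ne_zero _ hlamne) hD
    refine ⟨hane, ?_⟩
    rw [ha, hb, pow_succ]
    field_simp
end

section
/- With $\varpi_k$ as above, define $H_k(x) = \frac{1}{k}\varpi_k(|x|)\ln|x|$ (extended by $H_k(0)=0$). Then $H_k$ is differentiable on $\mathbb{R}$, and there is a constant $M_H$ independent of $k$ such that $|H_k'(x)| \le M_H \lambda_-^{-k}$ for all $x \in \mathbb{R}$. -/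
open Filter Asymptotics
open Set
open scoped Topology


-- aux: derivative vanishes on a closed ray where f is constant
lemma aux_deriv_zero_le (f : ℝ → ℝ) (hc : Continuous (deriv f))
    (h0 : ∀ x ≤ (0:ℝ), f x = 0) : ∀ u ≤ (0:ℝ), deriv f u = 0 := by
  have hneg : ∀ u < (0:ℝ), deriv f u = 0 := by
    intro u hu
    have he : f =ᶠ[𝓝 u] (fun _ => 0) :=
      Filter.eventuallyEq_of_mem (Iio_mem_nhds hu) (fun y hy => h0 y (le_of_lt hy))
    rw [he.deriv_eq, deriv_const]
  intro u hu
  rcases lt_or_eq_of_le hu with h | h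
  · exact hneg u h
  · subst h
    have ht1 : Tendsto (deriv f) (𝓝[<] (0:ℝ)) (𝓝 (deriv f 0)) :=
      (hc.continuousAt).tendsto.mono_left nhdsWithin_le_nhds
    have ht2 : Tendsto (deriv f) (𝓝[<] (0:ℝ)) (𝓝 0) := by
      apply Tendsto.congr' _ tendsto_const_nhds
      filter_upwards [self_mem_nhdsWithin] with y hy
      exact (hneg y hy).symm
    exact tendsto_nhds_unique ht1 ht2

lemma aux_deriv_zero_ge (f : ℝ → ℝ) (hc : Continuous (deriv f))
    (h1 : ∀ x ≥ (1:ℝ), f x = 1) : ∀ u ≥ (1:ℝ), deriv f u = 0 := by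
  have hpos : ∀ u > (1:ℝ), deriv f u = 0 := by
    intro u hu
    have he : f =ᶠ[𝓝 u] (fun _ => 1) :=
      Filter.eventuallyEq_of_mem (Ioi_mem_nhds hu) (fun y hy => h1 y (le_of_lt hy))
    rw [he.deriv_eq, deriv_const]
  intro u hu
  rcases lt_or_eq_of_le hu with h | h
  · exact hpos u h
  · subst h
    have ht1 : Tendsto (deriv f) (𝓝[>] (1:ℝ)) (𝓝 (deriv f 1)) :=
      (hc.continuousAt).tendsto.mono_left nhdsWithin_le_nhds
    have ht2 : Tendsto (deriv f) (𝓝[>] (1:ℝ)) (𝓝 0) := by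
      apply Tendsto.congr' _ tendsto_const_nhds
      filter_upwards [self_mem_nhdsWithin] with y hy
      exact (hpos y hy).symm
    exact tendsto_nhds_unique ht1 ht2


lemma aux_linquad (ϖ : ℝ → ℝ)
    (hdiff : Differentiable ℝ ϖ) (hdiff2 : Differentiable ℝ (deriv ϖ))
    (h0 : ∀ x ≤ (0:ℝ), ϖ x = 0)
    (hsecond : (fun x => deriv (deriv ϖ) x) =o[𝓝 (0 : ℝ)] fun x => x) :
    ∃ C ≥ (1:ℝ), (∀ u, 0 ≤ u → u ≤ 1 → |deriv ϖ u| ≤ C * u) ∧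
      (∀ u, 0 ≤ u → u ≤ 1 → |ϖ u| ≤ C * u * u) := by
  have hϖ0 : ϖ 0 = 0 := h0 0 le_rfl
  have hd0 : deriv ϖ 0 = 0 := by
    have := aux_deriv_zero_le ϖ hdiff2.continuous h0 0 le_rfl
    exact this
  obtain ⟨δ, hδpos, hδ⟩ := Metric.eventually_nhds_iff.mp (hsecond.def one_pos)
  set δ₀ : ℝ := min (δ/2) 1 with hδ₀def
  have hδ₀pos : 0 < δ₀ := lt_min (by linarith) one_pos
  have hδ₀le1 : δ₀ ≤ 1 := min_le_right _ _
  -- quadratic bound on deriv ϖ near 0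
  have hq : ∀ u, 0 ≤ u → u ≤ δ₀ → |deriv ϖ u| ≤ u * u := by
    intro u hu0 huδ
    have hseg := norm_image_sub_le_of_norm_deriv_le_segment'
      (f := deriv ϖ) (f' := deriv (deriv ϖ)) (a := 0) (b := u) (C := u)
      (fun t _ => (hdiff2 t).hasDerivAt.hasDerivWithinAt) ?_ u (right_mem_Icc.2 hu0)
    · simpa [hd0] using hseg
    · intro t ht
      have ht0 : 0 ≤ t := ht.1
      have htu : t < u := ht.2
      have hdist : dist t (0:ℝ) < δ := by
        rw [Real.dist_eq, sub_zero]
        rw [abs_of_nonneg ht0]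
        have : δ₀ ≤ δ/2 := min_le_left _ _
        linarith
      have := hδ hdist
      rw [Real.norm_eq_abs, Real.norm_eq_abs, one_mul] at this
      rw [Real.norm_eq_abs]
      calc |deriv (deriv ϖ) t| ≤ |t| := this
        _ = t := abs_of_nonneg ht0
        _ ≤ u := htu.le
  -- global bound on [0,1]
  obtain ⟨z, hz, hzmax⟩ := (isCompact_Icc (a := (0:ℝ)) (b := 1)).exists_isMaxOn
    ⟨0, by simp⟩ (hdiff2.continuous.abs).continuousOn (f := fun t => |deriv ϖ t|)
  set M : ℝ := |deriv ϖ z| with hM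
  have hM0 : 0 ≤ M := abs_nonneg _
  refine ⟨1 + M / δ₀, by nlinarith [div_nonneg hM0 hδ₀pos.le], ?_, ?_⟩
  · intro u hu0 hu1
    by_cases h : u ≤ δ₀
    · calc |deriv ϖ u| ≤ u * u := hq u hu0 h
        _ ≤ 1 * u := by nlinarith
        _ ≤ (1 + M / δ₀) * u := by nlinarith [div_nonneg hM0 hδ₀pos.le]
    · push_neg at h
      calc |deriv ϖ u| ≤ M := hzmax ⟨hu0, hu1⟩
        _ = (M / δ₀) * δ₀ := by field_simp
        _ ≤ (M / δ₀) * u := by nlinarith [div_nonneg hM0 hδ₀pos.le]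
        _ ≤ (1 + M / δ₀) * u := by nlinarith
  · intro u hu0 hu1
    have hC := fun (t : ℝ) (ht0 : 0 ≤ t) (ht1 : t ≤ 1) => by
      by_cases h : t ≤ δ₀
      · calc |deriv ϖ t| ≤ t * t := hq t ht0 h
          _ ≤ 1 * t := by nlinarith
          _ ≤ (1 + M / δ₀) * t := by nlinarith [div_nonneg hM0 hδ₀pos.le]
      · push_neg at h
        calc |deriv ϖ t| ≤ M := hzmax ⟨ht0, ht1⟩
          _ = (M / δ₀) * δ₀ := by field_simp
          _ ≤ (M / δ₀) * t := by nlinarith [div_nonneg hM0 hδ₀pos.le]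
          _ ≤ (1 + M / δ₀) * t := by nlinarith
    have hseg := norm_image_sub_le_of_norm_deriv_le_segment'
      (f := ϖ) (f' := deriv ϖ) (a := 0) (b := u) (C := (1 + M / δ₀) * u)
      (fun t _ => (hdiff t).hasDerivAt.hasDerivWithinAt) ?_ u (right_mem_Icc.2 hu0)
    · rw [hϖ0, sub_zero, sub_zero, Real.norm_eq_abs] at hseg
      calc |ϖ u| ≤ (1 + M / δ₀) * u * u := by linarith [hseg]
        _ = (1 + M / δ₀) * u * u := rfl
    · intro t ht
      rw [Real.norm_eq_abs]
      calc |deriv ϖ t| ≤ (1 + M / δ₀) * t := hC t ht.1 (le_trans ht.2.le hu1)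
        _ ≤ (1 + M / δ₀) * u := by nlinarith [div_nonneg hM0 hδ₀pos.le, ht.1, ht.2.le]

set_option maxHeartbeats 2000000 in
/-- with `H_k(x) = (1/k) ϖ_k(|x|) ln|x|` (and `H_k(0) = 0`), each `H_k`
(`k ≥ 1`) is differentiable on `ℝ` and there is a constant `M_H`, independent of `k`,
with `|H_k'(x)| ≤ M_H λ₋^{-k}` for all `x`. -/
theorem stmt14 (ϖ : ℝ → ℝ) (lamm Km : ℝ)
    (hlamm0 : 0 < lamm) (hlamm1 : lamm < 1) (hKm : 0 < Km)
    (hdiff : Differentiable ℝ ϖ) (hdiff2 : Differentiable ℝ (deriv ϖ))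
    (h0 : ∀ x ≤ (0 : ℝ), ϖ x = 0)
    (h1 : ∀ x ≥ (1 : ℝ), ϖ x = 1)
    (h01 : ∀ x ∈ Set.Icc (0 : ℝ) 1, ϖ x ∈ Set.Icc (0 : ℝ) 1)
    (hsecond : (fun x => deriv (deriv ϖ) x) =o[𝓝 (0 : ℝ)] fun x => x)
    (ϖk : ℕ → ℝ → ℝ)
    (hϖk : ∀ (k : ℕ) (x : ℝ), ϖk k x = ϖ (2 / (Km * lamm ^ k) * x))
    (H : ℕ → ℝ → ℝ)
    (hH : ∀ (k : ℕ) (x : ℝ),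
      H k x = if x = 0 then 0 else (1 / (k : ℝ)) * ϖk k |x| * Real.log |x|) :
    (∀ k : ℕ, 1 ≤ k → Differentiable ℝ (H k)) ∧
      ∃ MH : ℝ, ∀ k : ℕ, 1 ≤ k → ∀ x : ℝ, |deriv (H k) x| ≤ MH / lamm ^ k := by
  obtain ⟨C, hC1, hCd, hCf⟩ := aux_linquad ϖ hdiff hdiff2 h0 hsecond
  have hC0 : (0:ℝ) < C := lt_of_lt_of_le one_pos hC1
  have hd_ge := aux_deriv_zero_ge ϖ hdiff2.continuous h1
  obtain ⟨L1, hL1⟩ : ∃ L1 : ℝ, L1 = |Real.log lamm| := ⟨_, rfl⟩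
  obtain ⟨L2, hL2⟩ : ∃ L2 : ℝ, L2 = |Real.log (2/Km)| := ⟨_, rfl⟩
  have hL1n : 0 ≤ L1 := hL1 ▸ abs_nonneg _
  have hL2n : 0 ≤ L2 := hL2 ▸ abs_nonneg _
  obtain ⟨N, hN⟩ : ∃ N : ℝ, N = C * (2 + L2 + L1) + 1 := ⟨_, rfl⟩
  have hN1 : 1 ≤ N := by rw [hN]; nlinarith
  obtain ⟨MH, hMH⟩ : ∃ MH : ℝ, MH = (2/Km) * N := ⟨_, rfl⟩
  have key : ∀ k : ℕ, 1 ≤ k → ∀ x : ℝ,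
      DifferentiableAt ℝ (H k) x ∧ |deriv (H k) x| ≤ MH / lamm ^ k := by
    intro k hk
    have hk1 : (1:ℝ) ≤ (k:ℝ) := by exact_mod_cast hk
    have hk0 : (0:ℝ) < (k:ℝ) := by linarith
    have hlk : (0:ℝ) < lamm ^ k := pow_pos hlamm0 k
    obtain ⟨c, hc⟩ : ∃ c : ℝ, c = 2 / (Km * lamm ^ k) := ⟨_, rfl⟩
    have hc0 : 0 < c := by rw [hc]; positivity
    have hMHc : MH / lamm ^ k = c * N := by
      rw [hMH, hc]; field_simp
    obtain ⟨D, hD⟩ : ∃ D : ℝ → ℝ,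
      D = fun x => (1/(k:ℝ)) * (deriv ϖ (c*x) * c * Real.log x + ϖ (c*x) * x⁻¹) := ⟨_, rfl⟩
    have hHeven : ∀ y, H k (-y) = H k y := by
      intro y
      rw [hH, hH, abs_neg]
      simp only [neg_eq_zero]
    have hDer_pos : ∀ x : ℝ, 0 < x → HasDerivAt (H k) (D x) x := by
      intro x hx
      have h1' : HasDerivAt (fun y => ϖ (c*y)) (deriv ϖ (c*x) * c) x := by
        have h := (hdiff (c*x)).hasDerivAt.comp x ((hasDerivAt_id' x).const_mul c)
        rw [mul_one] at h
        exact h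
      have h2 := (h1'.mul (Real.hasDerivAt_log hx.ne')).const_mul (1/(k:ℝ))
      simp only [hD]
      refine HasDerivAt.congr_of_eventuallyEq h2 ?_
      filter_upwards [Ioi_mem_nhds hx] with y hy
      have hy0 : 0 < y := hy
      rw [hH, if_neg hy0.ne', hϖk, abs_of_pos hy0, ← hc]
      simp only [Pi.mul_apply]
      ring
    have hH0 : H k 0 = 0 := by rw [hH]; simp
    have hDer0 : HasDerivAt (H k) 0 0 := by
      rw [hasDerivAt_iff_tendsto_slope]
      apply squeeze_zero_norm' (a := fun x : ℝ => (C * c * c) * abs (Real.log |x| * |x|))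
      · have hr : (0:ℝ) < min 1 c⁻¹ := lt_min one_pos (inv_pos.mpr hc0)
        have hball : Metric.ball (0:ℝ) (min 1 c⁻¹) ∈ 𝓝 (0:ℝ) := Metric.ball_mem_nhds _ hr
        filter_upwards [self_mem_nhdsWithin, mem_nhdsWithin_of_mem_nhds hball] with x hx0 hxr
        have hxne : x ≠ 0 := hx0
        have ha0 : 0 < |x| := abs_pos.mpr hxne
        have hax : |x| < min 1 c⁻¹ := by
          rw [Metric.mem_ball, Real.dist_eq, sub_zero] at hxr; exact hxr
        have hca : c * |x| ≤ 1 := by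
          have h' : |x| ≤ c⁻¹ := le_of_lt (lt_of_lt_of_le hax (min_le_right _ _))
          calc c * |x| ≤ c * c⁻¹ := by nlinarith
            _ = 1 := mul_inv_cancel₀ hc0.ne'
        have hslope : slope (H k) 0 x = H k x / x := by
          rw [slope_def_field, hH0, sub_zero, sub_zero]
        have hfb : |ϖ (c * |x|)| ≤ C * (c * |x|) * (c * |x|) :=
          hCf (c * |x|) (by positivity) hca
        have hHb : |H k x| ≤ (C * c * c * abs (Real.log |x| * |x|)) * |x| := by
          rw [hH, if_neg hxne, hϖk, ← hc, abs_mul, abs_mul]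
          have h1k : |(1:ℝ)/(k:ℝ)| ≤ 1 := by
            rw [abs_of_nonneg (by positivity)]
            rw [div_le_one hk0]; exact hk1
          have hlogabs : abs (Real.log |x| * |x|) = abs (Real.log |x|) * |x| := by
            rw [abs_mul, abs_of_nonneg ha0.le]
          rw [hlogabs]
          nlinarith [abs_nonneg (ϖ (c * |x|)), abs_nonneg (Real.log |x|), mul_nonneg (abs_nonneg (ϖ (c*|x|))) (abs_nonneg (Real.log |x|)), abs_nonneg ((1:ℝ)/(k:ℝ))]
        rw [hslope, Real.norm_eq_abs, abs_div]
        rw [div_le_iff₀ ha0]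
        exact hHb
      · have habs : Tendsto (fun x : ℝ => |x|) (𝓝[≠] (0:ℝ)) (𝓝[>] 0) :=
          tendsto_abs_nhdsNE_zero
        have hlog : Tendsto (fun y : ℝ => Real.log y * y) (𝓝[>] (0:ℝ)) (𝓝 0) := by
          simpa [Real.rpow_one] using tendsto_log_mul_rpow_nhdsGT_zero one_pos
        have h := (((hlog.comp habs).abs).const_mul (C * c * c))
        simpa [Function.comp] using h
    have hbound : ∀ x : ℝ, 0 < x → |D x| ≤ c * N := by
      intro x hx
      obtain ⟨u, hu⟩ : ∃ u : ℝ, u = c * x := ⟨_, rfl⟩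
      have hu0 : 0 < u := by rw [hu]; positivity
      by_cases hu1 : 1 ≤ u
      · have hd : deriv ϖ u = 0 := hd_ge u hu1
        have hf : ϖ u = 1 := h1 u hu1
        have hxinv0 : 0 < x⁻¹ := inv_pos.mpr hx
        have hxinv : x⁻¹ ≤ c := by
          rw [inv_eq_one_div, div_le_iff₀ hx]
          rw [hu] at hu1; nlinarith
        have hDx : D x = (1/(k:ℝ)) * x⁻¹ := by
          rw [hD]; simp only [← hu, hd, hf]; ring
        rw [hDx, abs_mul, abs_of_nonneg hxinv0.le,
          abs_of_nonneg (by positivity : (0:ℝ) ≤ 1/(k:ℝ))]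
        have h1k : (1:ℝ)/(k:ℝ) ≤ 1 := by rw [div_le_one hk0]; exact hk1
        calc (1:ℝ)/(k:ℝ) * x⁻¹ ≤ 1 * x⁻¹ := mul_le_mul_of_nonneg_right h1k hxinv0.le
          _ = x⁻¹ := one_mul _
          _ ≤ c := hxinv
          _ ≤ c * N := le_mul_of_one_le_right hc0.le hN1
      · push_neg at hu1
        have hud : |deriv ϖ u| ≤ C * u := hCd u hu0.le hu1.le
        have huf : |ϖ u| ≤ C * u * u := hCf u hu0.le hu1.le
        have hxe : x = u / c := by rw [hu]; field_simp
        have hxinv : x⁻¹ = c / u := by rw [hxe]; field_simp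
        have hlogx : Real.log x = Real.log u - Real.log c := by
          rw [hxe, Real.log_div hu0.ne' hc0.ne']
        have hlogc : |Real.log c| ≤ L2 + (k:ℝ) * L1 := by
          have hce : Real.log c = Real.log (2/Km) - (k:ℝ) * Real.log lamm := by
            rw [hc, show (2:ℝ)/(Km * lamm^k) = (2/Km) / lamm^k by field_simp,
              Real.log_div (by positivity : ((2:ℝ)/Km) ≠ 0) (by positivity : (lamm^k) ≠ 0),
              Real.log_pow]
          rw [hce, sub_eq_add_neg]
          refine (abs_add_le _ _).trans ?_
          rw [abs_neg, abs_mul, Nat.abs_cast, hL2, hL1]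
        have htri : |Real.log x| ≤ |Real.log u| + (L2 + (k:ℝ) * L1) := by
          rw [hlogx, sub_eq_add_neg]
          refine (abs_add_le _ _).trans ?_
          rw [abs_neg]
          linarith
        have hulog : |Real.log u| * u ≤ 1 := by
          have h' := Real.abs_log_mul_self_lt u hu0 hu1.le
          rw [abs_mul, abs_of_pos hu0] at h'
          linarith
        have ht2 : |ϖ u * x⁻¹| ≤ C * c := by
          rw [abs_mul, hxinv, abs_of_nonneg (by positivity : (0:ℝ) ≤ c/u)]
          have h' : |ϖ u| * (c/u) ≤ (C * u * u) * (c/u) := by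
            apply mul_le_mul_of_nonneg_right huf (by positivity)
          have he : (C * u * u) * (c/u) = C * u * c := by field_simp
          rw [he] at h'
          nlinarith [mul_pos hC0 hc0]
        have ht1 : |deriv ϖ u * c * Real.log x| ≤ C * c * ((2 + L2) - 1 + (k:ℝ) * L1) := by
          rw [abs_mul, abs_mul, abs_of_nonneg hc0.le]
          have hstep : |deriv ϖ u| * c * |Real.log x|
              ≤ (C * u) * c * (|Real.log u| + (L2 + (k:ℝ) * L1)) := by
            apply mul_le_mul (mul_le_mul_of_nonneg_right hud hc0.le) htri
              (abs_nonneg _) (by positivity)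
          refine hstep.trans ?_
          have hk' : 0 ≤ (k:ℝ) * L1 := by positivity
          have h1 : u * |Real.log u| ≤ 1 := by nlinarith
          have h2 : u * (L2 + (k:ℝ) * L1) ≤ L2 + (k:ℝ) * L1 := by nlinarith
          nlinarith [mul_le_mul_of_nonneg_left (add_le_add h1 h2)
            (mul_nonneg hC0.le hc0.le)]
        have hsum : |D x| ≤ (1/(k:ℝ)) * (C * c * (2 + L2) + (k:ℝ) * (C * c * L1)) := by
          rw [hD, abs_mul, abs_of_nonneg (by positivity : (0:ℝ) ≤ 1/(k:ℝ))]
          simp only [← hu]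
          have habs' : |deriv ϖ u * c * Real.log x + ϖ u * x⁻¹|
              ≤ C * c * (2 + L2) + (k:ℝ) * (C * c * L1) := by
            refine (abs_add_le _ _).trans ?_
            have := add_le_add ht1 ht2
            nlinarith
          apply mul_le_mul_of_nonneg_left habs' (by positivity)
        refine hsum.trans ?_
        have heq2 : (1/(k:ℝ)) * ((k:ℝ) * (C * c * L1)) = C * c * L1 := by
          field_simp
        have hA : 0 ≤ C * c * (2 + L2) := by positivity
        have h1k : (1:ℝ)/(k:ℝ) ≤ 1 := by rw [div_le_one hk0]; exact hk1
        calc (1/(k:ℝ)) * (C * c * (2 + L2) + (k:ℝ) * (C * c * L1))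
            = (1/(k:ℝ)) * (C * c * (2 + L2)) + C * c * L1 := by rw [mul_add, heq2]
          _ ≤ C * c * (2 + L2) + C * c * L1 := by nlinarith
          _ = c * (C * (2 + L2 + L1)) := by ring
          _ ≤ c * N := by rw [hN]; nlinarith
    intro x
    rcases lt_trichotomy x 0 with hx | hx | hx
    · have h := (hDer_pos (-x) (by linarith)).comp x (hasDerivAt_neg x)
      have heq : (H k ∘ fun y => -y) = H k := funext fun y => hHeven y
      rw [heq] at h
      refine ⟨h.differentiableAt, ?_⟩
      rw [h.deriv, hMHc]
      calc |D (-x) * (-1)| = |D (-x)| := by rw [abs_mul]; simp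
        _ ≤ c * N := hbound (-x) (by linarith)
    · subst hx
      refine ⟨hDer0.differentiableAt, ?_⟩
      rw [hDer0.deriv, abs_zero, hMHc]
      nlinarith
    · have h := hDer_pos x hx
      refine ⟨h.differentiableAt, ?_⟩
      rw [h.deriv, hMHc]
      exact hbound x hx
  exact ⟨fun k hk x => (key k hk x).1, MH, fun k hk x => (key k hk x).2⟩
end
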